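/- arXiv:1709.05389 — 6 statements merged into one kernel-verified Lean document; each statement's English description precedes it below -/
import Mathlib

section
/- For every complex number s with Re(s) > −1, every natural number m with m > Re(s) − 1, and every even natural number k, one has B_{k+2} · (s)_{k+1}/(k+2)! = (−1)^{k/2} ∫₀^∞ x^k w_s(x) dx. -/
open Real Complex MeasureTheory Set

/-- `g t = 1/(e^{2πt} - 1)`. -/
noncomputable def g (t : ℝ) : ℝ := 1 / (Real.exp (2 * π * t) - 1)

/-- The weight function
`w_s(x) = (2(−1)^m x^s)/(Γ(s)Γ(m+1−s)) · ∫_x^∞ (t−x)^{m−s} g^{(m)}(t) dt`. -/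
noncomputable def w (s : ℂ) (m : ℕ) (x : ℝ) : ℂ :=
  (2 * (-1) ^ m * (x : ℂ) ^ s) / (Complex.Gamma s * Complex.Gamma ((m : ℂ) + 1 - s)) *
    ∫ t in Ioi x, ((t - x : ℝ) : ℂ) ^ ((m : ℂ) - s) * ((iteratedDeriv m g t : ℝ) : ℂ)

noncomputable def aa (n : ℕ) : ℝ := 2 * π * (n + 1)

lemma aa_pos (n : ℕ) : 0 < aa n := by
  have : (0:ℝ) < (n:ℝ) + 1 := by positivity
  exact mul_pos (by positivity) this

lemma aa_one_le (n : ℕ) : 1 ≤ aa n := by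
  have h1 : (1:ℝ) ≤ (n:ℝ) + 1 := by
    have : (0:ℝ) ≤ (n:ℝ) := Nat.cast_nonneg n
    linarith
  calc (1:ℝ) ≤ 2 * π * 1 := by nlinarith [Real.pi_gt_three]
  _ ≤ 2 * π * ((n:ℝ)+1) := by nlinarith [Real.pi_gt_three]

lemma exp_aa (n : ℕ) (t : ℝ) :
    Real.exp (-(aa n) * t) = Real.exp (-(2 * π * t)) ^ (n + 1) := by
  rw [← Real.exp_nat_mul, aa]
  push_cast
  ring_nf

/-- geometric series for g -/
lemma hasSum_g {t : ℝ} (ht : 0 < t) :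
    HasSum (fun n : ℕ => Real.exp (-(aa n) * t)) (g t) := by
  have hr : Real.exp (-(2 * π * t)) < 1 := by
    rw [Real.exp_lt_one_iff]
    have := Real.pi_pos; nlinarith
  have hr0 : 0 < Real.exp (-(2 * π * t)) := Real.exp_pos _
  have h := (hasSum_geometric_of_lt_one hr0.le hr).mul_left (Real.exp (-(2 * π * t)))
  have h2 : HasSum (fun n : ℕ => Real.exp (-(aa n) * t))
      (Real.exp (-(2 * π * t)) * (1 - Real.exp (-(2 * π * t)))⁻¹) := by
    refine h.congr_fun fun n => ?_
    rw [exp_aa, pow_succ, mul_comm]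
  convert h2 using 1
  unfold g
  rw [Real.exp_neg]
  have he : Real.exp (2 * π * t) ≠ 0 := (Real.exp_pos _).ne'
  have he1 : Real.exp (2 * π * t) - 1 ≠ 0 := by
    have : 1 < Real.exp (2 * π * t) := by
      rw [Real.one_lt_exp_iff]
      · positivity
    linarith
  have he2 : 1 - (Real.exp (2 * π * t))⁻¹ ≠ 0 := by
    rw [← Real.exp_neg]; linarith
  field_simp

lemma summable_aux (p : ℕ) {c : ℝ} (hc : 0 < c) :
    Summable (fun n : ℕ => (aa n) ^ p * Real.exp (-(aa n) * c)) := by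
  have hr : ‖Real.exp (-(2 * π * c))‖ < 1 := by
    rw [Real.norm_eq_abs, abs_of_pos (Real.exp_pos _), Real.exp_lt_one_iff]
    have := Real.pi_pos; nlinarith
  have h := summable_pow_mul_geometric_of_norm_lt_one (R := ℝ) p hr
  have h1 : Summable (fun n : ℕ => ((n:ℝ)+1) ^ p * Real.exp (-(2*π*c)) ^ (n+1)) := by
    have := (summable_nat_add_iff (f := fun n : ℕ => (n:ℝ) ^ p * Real.exp (-(2*π*c)) ^ n) 1).mpr h
    simpa using this
  have h2 := h1.mul_left ((2*π) ^ p)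
  refine h2.congr fun n => ?_
  rw [exp_aa, aa, mul_pow (2*π) ((n:ℝ)+1) p]
  ring

lemma summable_rpow_aux (q : ℝ) {c : ℝ} (hc : 0 < c) :
    Summable (fun n : ℕ => (aa n) ^ q * Real.exp (-(aa n) * c)) := by
  refine Summable.of_nonneg_of_le (fun n => mul_nonneg (Real.rpow_nonneg (aa_pos n).le q) (Real.exp_pos _).le) (fun n => ?_)
    (summable_aux ⌈|q|⌉₊ hc)
  have h1 : (aa n) ^ q ≤ (aa n) ^ (⌈|q|⌉₊ : ℝ) := by
    apply Real.rpow_le_rpow_of_exponent_le (aa_one_le n)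
    calc q ≤ |q| := le_abs_self q
    _ ≤ ⌈|q|⌉₊ := Nat.le_ceil _
  rw [Real.rpow_natCast] at h1
  exact mul_le_mul_of_nonneg_right h1 (Real.exp_pos _).le

lemma summable_term (m : ℕ) {t : ℝ} (ht : 0 < t) :
    Summable (fun n : ℕ => (-(aa n)) ^ m * Real.exp (-(aa n) * t)) := by
  refine (summable_aux m ht).of_norm_bounded (fun n => ?_)
  rw [norm_mul, norm_pow, norm_neg, Real.norm_eq_abs, Real.norm_eq_abs,
    abs_of_pos (aa_pos n), abs_of_pos (Real.exp_pos _)]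

lemma hasSum_iteratedDeriv_g (m : ℕ) : ∀ {t : ℝ}, 0 < t →
    HasSum (fun n : ℕ => (-(aa n)) ^ m * Real.exp (-(aa n) * t)) (iteratedDeriv m g t) := by
  induction m with
  | zero =>
    intro t ht
    simpa using hasSum_g ht
  | succ m ih =>
    intro t ht
    rw [iteratedDeriv_succ]
    have hopen : IsOpen (Ioi (t/2)) := isOpen_Ioi
    have hpre : IsPreconnected (Ioi (t/2)) := (convex_Ioi _).isPreconnected
    have htmem : t ∈ Ioi (t/2) := mem_Ioi.mpr (half_lt_self ht)
    -- the sum function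
    set h : ℝ → ℝ := fun y => ∑' n : ℕ, (-(aa n)) ^ m * Real.exp (-(aa n) * y) with hh
    -- deriv congr
    have heq : iteratedDeriv m g =ᶠ[nhds t] h := by
      filter_upwards [hopen.mem_nhds htmem] with y hy
      exact ((ih (lt_trans (by linarith) (mem_Ioi.mp hy))).tsum_eq).symm
    rw [heq.deriv_eq]
    -- termwise differentiation
    have hder : HasDerivAt h (∑' n : ℕ, (-(aa n)) ^ (m+1) * Real.exp (-(aa n) * t)) t := by
      apply hasDerivAt_tsum_of_isPreconnected
        (u := fun n => (aa n) ^ (m+1) * Real.exp (-(aa n) * (t/2)))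
        (summable_aux (m+1) (by linarith)) hopen hpre
        (g' := fun n y => (-(aa n)) ^ (m+1) * Real.exp (-(aa n) * y))
      · intro n y hy
        have h1 : HasDerivAt (fun y : ℝ => Real.exp (-(aa n) * y))
            (Real.exp (-(aa n) * y) * (-(aa n))) y :=
          ((hasDerivAt_id y).const_mul (-(aa n))).exp.congr_deriv (by simp)
        have := h1.const_mul ((-(aa n)) ^ m)
        refine this.congr_deriv ?_
        rw [pow_succ]; ring
      · intro n y hy
        rw [norm_mul, norm_pow, norm_neg, Real.norm_eq_abs, Real.norm_eq_abs,
          abs_of_pos (aa_pos n), abs_of_pos (Real.exp_pos _)]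
        have : Real.exp (-(aa n) * y) ≤ Real.exp (-(aa n) * (t/2)) := by
          apply Real.exp_le_exp.mpr
          have := aa_pos n
          have hy' := mem_Ioi.mp hy
          nlinarith
        exact mul_le_mul_of_nonneg_left this (pow_nonneg (aa_pos n).le _)
      · exact htmem
      · exact (summable_term m ht)
      · exact htmem
    rw [hder.deriv]
    exact (summable_term (m+1) ht).hasSum

lemma inner_integral (s : ℂ) (m : ℕ) (hm : s.re - 1 < m) {x : ℝ} (hx : 0 < x) :
    (∫ t in Ioi x, ((t - x : ℝ) : ℂ) ^ ((m : ℂ) - s) * ((iteratedDeriv m g t : ℝ) : ℂ))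
      = (-1) ^ m * Complex.Gamma ((m : ℂ) + 1 - s) *
        ∑' n : ℕ, ((aa n : ℝ) : ℂ) ^ (s - 1) * (Real.exp (-(aa n) * x) : ℂ) := by
  -- shift the integral
  have hshift : (∫ t in Ioi x, ((t - x : ℝ) : ℂ) ^ ((m : ℂ) - s) * ((iteratedDeriv m g t : ℝ) : ℂ))
      = ∫ u in Ioi (0:ℝ), ((u : ℝ) : ℂ) ^ ((m : ℂ) - s) * ((iteratedDeriv m g (u + x) : ℝ) : ℂ) := by
    have hmp : MeasurePreserving (fun u : ℝ => u + x) volume volume :=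
      measurePreserving_add_right volume x
    have hemb : MeasurableEmbedding (fun u : ℝ => u + x) :=
      (MeasurableEquiv.addRight x).measurableEmbedding
    have := hmp.setIntegral_preimage_emb hemb
      (fun t => ((t - x : ℝ) : ℂ) ^ ((m : ℂ) - s) * ((iteratedDeriv m g t : ℝ) : ℂ)) (Ioi x)
    rw [← this]
    have hpre : (fun u : ℝ => u + x) ⁻¹' (Ioi x) = Ioi 0 := by
      ext u; simp [mem_Ioi]
    rw [hpre]
    congr 1
    ext u
    rw [add_sub_cancel_right]
  rw [hshift]
  -- now apply hasSum_mellin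
  have hs' : 0 < ((m : ℂ) + 1 - s).re := by
    simp only [Complex.sub_re, Complex.add_re, Complex.natCast_re, Complex.one_re]
    linarith
  have key := hasSum_mellin (ι := ℕ)
    (a := fun n => (((-(aa n)) ^ m * Real.exp (-(aa n) * x) : ℝ) : ℂ))
    (p := aa) (F := fun u => ((iteratedDeriv m g (u + x) : ℝ) : ℂ))
    (s := (m : ℂ) + 1 - s)
    (fun n => Or.inr (aa_pos n)) hs'
    (fun u hu => ?_) ?_
  · -- use key
    have hm1 : mellin (fun u => ((iteratedDeriv m g (u + x) : ℝ) : ℂ)) ((m : ℂ) + 1 - s)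
        = ∫ u in Ioi (0:ℝ), ((u : ℝ) : ℂ) ^ ((m : ℂ) - s) * ((iteratedDeriv m g (u + x) : ℝ) : ℂ) := by
      rw [mellin]
      congr 1
      ext u
      rw [smul_eq_mul]
      congr 2
      ring
    rw [← hm1]
    rw [← key.tsum_eq]
    rw [← tsum_mul_left]
    congr 1
    ext n
    have hne : ((aa n : ℝ) : ℂ) ≠ 0 := Complex.ofReal_ne_zero.mpr (aa_pos n).ne'
    push_cast
    rw [neg_pow (((aa n):ℂ)) m]
    have hpow : ((aa n : ℝ) : ℂ) ^ (m:ℕ) = ((aa n : ℝ) : ℂ) ^ (m:ℂ) := by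
      rw [Complex.cpow_natCast]
    rw [hpow]
    rw [div_eq_mul_inv, ← Complex.cpow_neg]
    have : ((aa n : ℝ) : ℂ) ^ (m:ℂ) * ((aa n : ℝ) : ℂ) ^ (-((m:ℂ) + 1 - s))
        = ((aa n : ℝ) : ℂ) ^ (s - 1) := by
      rw [← Complex.cpow_add _ _ hne]
      congr 1
      ring
    rw [← this]
    ring
  · -- hF
    have hux : 0 < u + x := by have := mem_Ioi.mp hu; linarith
    have h1 := Complex.hasSum_ofReal.mpr (hasSum_iteratedDeriv_g m hux)
    refine h1.congr_fun fun n => ?_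
    push_cast
    rw [show -((aa n:ℝ):ℂ) * ((u:ℝ) + (x:ℝ) : ℂ) = -(aa n:ℝ) * (x:ℝ) + -(aa n:ℝ) * (u:ℝ) by push_cast; ring,
      Complex.exp_add]
    ring
  · -- h_sum
    have hre : ((m : ℂ) + 1 - s).re = (m : ℝ) + 1 - s.re := by
      simp [Complex.sub_re, Complex.add_re]
    rw [hre]
    refine (summable_rpow_aux (s.re - 1) hx).congr fun n => ?_
    rw [Complex.norm_real, Real.norm_eq_abs, abs_mul, _root_.abs_pow, abs_neg,
      _root_.abs_of_pos (aa_pos n), Real.abs_exp, ← Real.rpow_natCast (aa n) m,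
      mul_div_right_comm, ← Real.rpow_sub (aa_pos n),
      show ((m:ℕ):ℝ) - ((m:ℝ) + 1 - s.re) = s.re - 1 by push_cast; ring]

lemma summable_S (s : ℂ) {x : ℝ} (hx : 0 < x) :
    Summable (fun n : ℕ => ((aa n : ℝ) : ℂ) ^ (s - 1) * (Real.exp (-(aa n) * x) : ℂ)) := by
  apply Summable.of_norm
  refine (summable_rpow_aux (s.re - 1) hx).congr fun n => ?_
  rw [norm_mul,
    Complex.norm_cpow_eq_rpow_re_of_pos (aa_pos n), Complex.norm_real, Real.norm_eq_abs, Real.abs_exp,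
    Complex.sub_re, Complex.one_re]

lemma w_eq (s : ℂ) (m : ℕ) (hm : s.re - 1 < m) {x : ℝ} (hx : 0 < x) :
    w s m x = 2 * (x : ℂ) ^ s / Complex.Gamma s *
      ∑' n : ℕ, ((aa n : ℝ) : ℂ) ^ (s - 1) * (Real.exp (-(aa n) * x) : ℂ) := by
  have hs' : 0 < ((m : ℂ) + 1 - s).re := by
    simp only [Complex.sub_re, Complex.add_re, Complex.natCast_re, Complex.one_re]
    linarith
  have hB : Complex.Gamma ((m : ℂ) + 1 - s) ≠ 0 := Complex.Gamma_ne_zero_of_re_pos hs'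
  rw [w, inner_integral s m hm hx]
  rcases eq_or_ne (Complex.Gamma s) 0 with hG | hG
  · rw [hG]
    simp
  · field_simp
    ring_nf
    rw [pow_mul, ← pow_mul, mul_comm m 2, pow_mul]
    norm_num
    left; congr 1; ext n; ring_nf

lemma summable_inv_sq : Summable (fun n : ℕ => (((n:ℝ)+1) ^ 2)⁻¹) := by
  have h := Real.summable_one_div_nat_pow.mpr (le_refl 2)
  have := (summable_nat_add_iff (f := fun n : ℕ => 1 / (n:ℝ) ^ 2) 1).mpr h
  refine this.congr fun n => ?_
  push_cast
  rw [one_div]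

lemma outer_integral (s : ℂ) (hs : -1 < s.re) (m : ℕ) (hm : s.re - 1 < m) (k : ℕ) :
    (∫ x in Ioi (0:ℝ), (x : ℂ) ^ k * w s m x)
      = 2 * Complex.Gamma ((k : ℂ) + s + 1) / Complex.Gamma s *
        ∑' n : ℕ, ((aa n : ℝ) : ℂ) ^ (-((k : ℂ) + 2)) := by
  set S : ℝ → ℂ := fun x => ∑' n : ℕ, ((aa n : ℝ) : ℂ) ^ (s - 1) * (Real.exp (-(aa n) * x) : ℂ)
    with hS
  have hstep : (∫ x in Ioi (0:ℝ), (x : ℂ) ^ k * w s m x)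
      = (2 / Complex.Gamma s) * mellin S ((k : ℂ) + s + 1) := by
    rw [mellin, ← integral_const_mul]
    refine setIntegral_congr_fun measurableSet_Ioi fun x hx => ?_
    have hx' : 0 < x := mem_Ioi.mp hx
    rw [w_eq s m hm hx']
    have hxc : (x : ℂ) ≠ 0 := Complex.ofReal_ne_zero.mpr hx'.ne'
    rw [smul_eq_mul, show (k : ℂ) + s + 1 - 1 = (k:ℂ) + s by ring,
      Complex.cpow_add _ _ hxc, Complex.cpow_natCast]
    ring
  rw [hstep]
  have hs1 : 0 < ((k : ℂ) + s + 1).re := by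
    simp only [Complex.add_re, Complex.natCast_re, Complex.one_re]
    have : (0:ℝ) ≤ k := Nat.cast_nonneg k
    linarith
  have key := hasSum_mellin (ι := ℕ)
    (a := fun n => ((aa n : ℝ) : ℂ) ^ (s - 1)) (p := aa) (F := S) (s := (k : ℂ) + s + 1)
    (fun n => Or.inr (aa_pos n)) hs1
    (fun x hx => ((summable_S s (mem_Ioi.mp hx)).hasSum))
    ?_
  · rw [← key.tsum_eq, ← tsum_mul_left, ← tsum_mul_left]
    refine tsum_congr fun n => ?_
    have hne : ((aa n : ℝ) : ℂ) ≠ 0 := Complex.ofReal_ne_zero.mpr (aa_pos n).ne'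
    have hA : ((aa n : ℝ) : ℂ) ^ (s - 1) / ((aa n : ℝ) : ℂ) ^ ((k:ℂ) + s + 1)
        = ((aa n : ℝ) : ℂ) ^ (-((k : ℂ) + 2)) := by
      rw [div_eq_mul_inv, ← Complex.cpow_neg, ← Complex.cpow_add _ _ hne]
      congr 1
      ring
    rw [← hA]
    ring
  · -- summability of norms
    apply Summable.of_nonneg_of_le
      (fun n => div_nonneg (norm_nonneg _) (Real.rpow_nonneg (aa_pos n).le _))
      (fun n => ?_) summable_inv_sq
    have h1 : ‖((aa n : ℝ) : ℂ) ^ (s - 1)‖ = (aa n) ^ (s.re - 1) := by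
      rw [Complex.norm_cpow_eq_rpow_re_of_pos (aa_pos n),
        Complex.sub_re, Complex.one_re]
    rw [h1]
    have hre : ((k : ℂ) + s + 1).re = (k : ℝ) + s.re + 1 := by
      simp [Complex.add_re]
    rw [hre, ← Real.rpow_sub (aa_pos n),
      show s.re - 1 - ((k : ℝ) + s.re + 1) = -((k : ℝ) + 2) by ring]
    rw [Real.rpow_neg (aa_pos n).le, inv_le_inv₀ (Real.rpow_pos_of_pos (aa_pos n) _) (by positivity)]
    have h2 : ((n:ℝ)+1) ^ 2 = ((n:ℝ)+1) ^ ((2:ℕ):ℝ) := by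
      rw [Real.rpow_natCast]
    rw [h2]
    have h3 : ((n:ℝ)+1) ^ ((2:ℕ):ℝ) ≤ (aa n) ^ ((2:ℕ):ℝ) := by
      apply Real.rpow_le_rpow (by positivity) _ (by positivity)
      have hn0 : (0:ℝ) ≤ (n:ℝ) := Nat.cast_nonneg n
      calc (n:ℝ) + 1 ≤ 2 * π * ((n:ℝ)+1) := by nlinarith [Real.pi_gt_three]
      _ = aa n := rfl
    refine h3.trans ?_
    apply Real.rpow_le_rpow_of_exponent_le (aa_one_le n)
    push_cast
    linarith [Nat.cast_nonneg (α := ℝ) k]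

lemma hasSum_T (k : ℕ) (hk : Even k) :
    HasSum (fun n : ℕ => (aa n) ^ (-((k:ℝ)+2)))
      ((-1:ℝ) ^ (k/2) * (bernoulli (k+2) : ℝ) / (2 * (k+2).factorial)) := by
  obtain ⟨j, hj⟩ := hk
  have hj' : k = 2 * j := by omega
  have hK : 2 * (j+1) = k + 2 := by omega
  have h := hasSum_zeta_nat (k := j+1) (Nat.succ_ne_zero j)
  rw [hK] at h
  -- shift the index
  have hf0 : (1 : ℝ) / (0:ℕ) ^ (k+2) = 0 := by
    norm_num
  have h1 : HasSum (fun n : ℕ => 1 / ((n+1 : ℕ):ℝ) ^ (k+2))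
      ((-1:ℝ) ^ (j+1+1) * 2 ^ (k+2-1) * π ^ (k+2) * (bernoulli (k+2):ℝ) / (k+2).factorial) := by
    apply (hasSum_nat_add_iff (f := fun n : ℕ => 1 / ((n:ℕ):ℝ) ^ (k+2)) 1).mpr
    convert h using 1
    · rfl
    simp
  have h2 := h1.mul_left (((2*π) ^ (k+2))⁻¹)
  have heq : ∀ n : ℕ, ((2*π) ^ (k+2))⁻¹ * (1 / ((n+1 : ℕ):ℝ) ^ (k+2))
      = (aa n) ^ (-((k:ℝ)+2)) := by
    intro n
    rw [show -((k:ℝ)+2) = -(((k+2:ℕ):ℝ)) by push_cast; ring,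
      Real.rpow_neg (aa_pos n).le, Real.rpow_natCast]
    rw [show aa n = 2 * π * ((n:ℝ)+1) from rfl, mul_pow (2*π) ((n:ℝ)+1) (k+2)]
    push_cast
    field_simp
  have h3 := h2.congr_fun (fun n => (heq n).symm)
  convert h3 using 1
  · rfl
  have hpi : (π:ℝ) ≠ 0 := Real.pi_ne_zero
  have hfac : (((k+2).factorial : ℕ) : ℝ) ≠ 0 := Nat.cast_ne_zero.mpr (Nat.factorial_ne_zero _)
  rw [show k+2-1 = k+1 by omega, show k/2 = j by omega, pow_add ((-1:ℝ)) (j+1) 1,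
    mul_pow 2 π (k+2), pow_add ((-1:ℝ)) j 1]
  field_simp
  ring

lemma Gamma_pochhammer (N : ℕ) (s : ℂ) (h : ∀ i : ℕ, i < N → s + i ≠ 0) :
    Complex.Gamma (s + N) = (ascPochhammer ℂ N).eval s * Complex.Gamma s := by
  induction N with
  | zero => simp
  | succ N ih =>
    have h1 : s + ((N+1 : ℕ) : ℂ) = (s + N) + 1 := by push_cast; ring
    rw [h1, Complex.Gamma_add_one _ (h N (Nat.lt_succ_self N)),
      ih (fun i hi => h i (hi.trans (Nat.lt_succ_self N))),
      ascPochhammer_succ_right, Polynomial.eval_mul]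
    simp only [Polynomial.eval_add, Polynomial.eval_X, Polynomial.eval_natCast]
    ring

theorem bernoulli_eq_integral_weight (s : ℂ) (hs : -1 < s.re)
    (m : ℕ) (hm : s.re - 1 < m) (k : ℕ) (hk : Even k) :
    (bernoulli (k + 2) : ℂ) * (ascPochhammer ℂ (k + 1)).eval s / ((k + 2).factorial : ℂ) =
      (-1) ^ (k / 2) * ∫ x in Ioi (0 : ℝ), (x : ℂ) ^ k * w s m x := by
  rw [outer_integral s hs m hm k]
  have hT := hasSum_T k hk
  have hTc : HasSum (fun n : ℕ => ((aa n : ℝ) : ℂ) ^ (-((k:ℂ)+2)))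
      ((((-1:ℝ) ^ (k/2) * (bernoulli (k+2) : ℝ) / (2 * (k+2).factorial)) : ℝ) : ℂ) := by
    refine (Complex.hasSum_ofReal.mpr hT).congr_fun fun n => ?_
    rw [Complex.ofReal_cpow (aa_pos n).le]
    congr 1
    push_cast
    ring
  rw [hTc.tsum_eq]
  rcases eq_or_ne s 0 with rfl | hs0
  · rw [Complex.Gamma_zero]
    simp [ascPochhammer_eval_zero]
  · have hΓs : Complex.Gamma s ≠ 0 := by
      apply Complex.Gamma_ne_zero
      intro n hn
      rcases Nat.eq_zero_or_pos n with h0 | h0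
      · rw [h0] at hn; simp at hn; exact hs0 hn
      · have := congrArg Complex.re hn
        simp only [Complex.neg_re, Complex.natCast_re] at this
        have h1 : (1:ℝ) ≤ (n:ℝ) := by exact_mod_cast h0
        linarith
    have hP : Complex.Gamma ((k:ℂ) + s + 1)
        = (ascPochhammer ℂ (k+1)).eval s * Complex.Gamma s := by
      have h1 : (k:ℂ) + s + 1 = s + ((k+1 : ℕ) : ℂ) := by push_cast; ring
      rw [h1]
      apply Gamma_pochhammer
      intro i hi
      rcases Nat.eq_zero_or_pos i with h0 | h0
      · rw [h0]; simpa using hs0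
      · intro hc
        have := congrArg Complex.re hc
        simp only [Complex.add_re, Complex.natCast_re, Complex.zero_re] at this
        have h1 : (1:ℝ) ≤ (i:ℝ) := by exact_mod_cast h0
        linarith
    rw [hP]
    have hfac : (((k+2).factorial : ℕ) : ℂ) ≠ 0 :=
      Nat.cast_ne_zero.mpr (Nat.factorial_ne_zero _)
    push_cast
    field_simp
    ring_nf
    rw [mul_comm (k/2) 2, pow_mul]
    norm_num
end

section
/- For every integer m ≥ 1, the polynomial identity (m+1)(m+2) P_{m+1}(x) = 2(2m+3) x P_m(x) + (m+1)(m+2) P_{m−1}(x) holds; moreover P_0(x) = 2 and P_1(x) = 6x. -/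
open Finset

noncomputable def c (M K : ℕ) : ℂ :=
  (((M + 1).choose (K + 1) : ℕ) : ℂ) * (((M + K + 2).choose (K + 1) : ℕ) : ℂ)

lemma chf (a b : ℕ) : (((a + b).choose a : ℕ) : ℂ)
    = ((a + b).factorial : ℂ) / ((a.factorial : ℂ) * (b.factorial : ℂ)) := by
  rw [Nat.cast_choose ℂ (Nat.le_add_right a b), Nat.add_sub_cancel_left]

lemma facne (a : ℕ) : ((a.factorial : ℕ) : ℂ) ≠ 0 := by
  exact_mod_cast Nat.factorial_ne_zero a

lemma facstep (a : ℕ) : (((a+1).factorial : ℕ) : ℂ) = ((a:ℂ)+1) * (a.factorial : ℂ) := by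
  rw [Nat.factorial_succ]; push_cast; ring

set_option maxHeartbeats 2000000 in
lemma key (n k : ℕ) (hk : k ≤ n + 2) :
    ((n:ℂ)+2)*((n:ℂ)+3) * c (n+2) k
      = 2*(2*(n:ℂ)+5) * ((k:ℂ) * c (n+1) (k-1) + ((k:ℂ)+1) * c (n+1) k)
      + ((n:ℂ)+2)*((n:ℂ)+3) * c n k := by
  rcases k with _ | a
  · simp [c, Nat.choose_one_right]; push_cast; ring
  · -- k = a+1, a ≤ n+1
    simp only [Nat.succ_sub_one]
    rcases (show a = n + 1 ∨ a = n ∨ a + 1 ≤ n by omega) with h | h | hle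
    · subst h
      simp only [c]
      norm_num
      rw [Nat.choose_eq_zero_of_lt (show n+1 < n+1+1+1 by omega)]
      rw [show n+2+(n+1+1)+2 = (n+3)+(n+3) by omega]
      rw [show n+1+1+1 = n+3 by omega]
      rw [show n+1+(n+1)+2 = (n+2)+(n+2) by omega]
      rw [show n+1+1 = n+2 by omega]
      rw [chf (n+3) (n+3), chf (n+2) (n+2)]
      have E1 : ((((n+3)+(n+3)).factorial : ℕ) : ℂ)
          = (2*(n:ℂ)+6)*(2*(n:ℂ)+5) * ((((n+2)+(n+2)).factorial : ℕ) : ℂ) := by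
        rw [show (n+3)+(n+3) = ((n+2)+(n+2))+1+1 by omega, facstep, facstep]
        push_cast; ring
      have E2 : (((n+3).factorial : ℕ) : ℂ) = ((n:ℂ)+3) * (((n+2).factorial : ℕ) : ℂ) := by
        rw [show n+3 = (n+2)+1 by omega, facstep]; push_cast; ring
      rw [E1, E2]
      have A := facne (n+2)
      have B := facne ((n+2)+(n+2))
      have C1 : ((n:ℂ)+3) ≠ 0 := by
        have := Nat.cast_ne_zero (R := ℂ).mpr (show n+3 ≠ 0 by omega)
        push_cast at this; exact this
      field_simp
      ring
    · subst h
      simp only [c]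
      norm_num
      rw [show a+2+(a+1)+2 = (a+2)+(a+3) by omega]
      rw [show a+1+a+2 = (a+1)+(a+2) by omega]
      rw [show a+1+(a+1)+2 = (a+2)+(a+2) by omega]
      rw [show a+1+1 = a+2 by omega]
      rw [chf (a+2) (a+3), chf (a+1) (a+2), chf (a+2) (a+2)]
      have E1 : ((((a+2)+(a+3)).factorial : ℕ) : ℂ)
          = (2*(a:ℂ)+5)*(2*(a:ℂ)+4) * ((((a+1)+(a+2)).factorial : ℕ) : ℂ) := by
        rw [show (a+2)+(a+3) = ((a+1)+(a+2))+1+1 by omega, facstep, facstep]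
        push_cast; ring
      have E2 : ((((a+2)+(a+2)).factorial : ℕ) : ℂ)
          = (2*(a:ℂ)+4) * ((((a+1)+(a+2)).factorial : ℕ) : ℂ) := by
        rw [show (a+2)+(a+2) = ((a+1)+(a+2))+1 by omega, facstep]
        push_cast; ring
      have E3 : (((a+2).factorial : ℕ) : ℂ) = ((a:ℂ)+2) * (((a+1).factorial : ℕ) : ℂ) := by
        rw [show a+2 = (a+1)+1 by omega, facstep]; push_cast; ring
      have E4 : (((a+3).factorial : ℕ) : ℂ)
          = ((a:ℂ)+3)*((a:ℂ)+2) * (((a+1).factorial : ℕ) : ℂ) := by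
        rw [show a+3 = (a+1)+1+1 by omega, facstep, facstep]; push_cast; ring
      rw [E1, E2, E3, E4]
      have A := facne (a+1)
      have B := facne ((a+1)+(a+2))
      have C1 : ((a:ℂ)+2) ≠ 0 := by
        have := Nat.cast_ne_zero (R := ℂ).mpr (show a+2 ≠ 0 by omega)
        push_cast at this; exact this
      have C2 : ((a:ℂ)+3) ≠ 0 := by
        have := Nat.cast_ne_zero (R := ℂ).mpr (show a+3 ≠ 0 by omega)
        push_cast at this; exact this
      field_simp
      ring
    · obtain ⟨e, h⟩ : ∃ e : ℕ, n = a + e + 1 := ⟨n - a - 1, by omega⟩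
      subst h
      simp only [c]
      norm_num
      have h1 : (((a+e+1+2+1).choose (a+1+1) : ℕ) : ℂ) = (((a:ℂ)+(e:ℂ)+4)*((a:ℂ)+(e:ℂ)+3)*((a:ℂ)+(e:ℂ)+2)*((a:ℂ)+(e:ℂ)+1)*(((a+e).factorial : ℕ) : ℂ)) / (((a:ℂ)+2)*((a:ℂ)+1)*(((a).factorial : ℕ) : ℂ)*((e:ℂ)+2)*((e:ℂ)+1)*(((e).factorial : ℕ) : ℂ)) := by
        rw [show (a+1+1:ℕ) = a+2 by omega]
        rw [show (a+e+1+2+1:ℕ) = (a+2)+(e+2) by omega]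
        rw [chf (a+2) (e+2)]
        rw [show ((a+2:ℕ))+(e+2) = (a+e)+1+1+1+1 by omega]
        rw [show (e+2:ℕ) = e+1+1 by omega]
        simp only [facstep]
        push_cast
        ring
      have h2 : (((a+e+1+2+(a+1)+2).choose (a+1+1) : ℕ) : ℂ) = ((2*(a:ℂ)+(e:ℂ)+6)*(2*(a:ℂ)+(e:ℂ)+5)*(2*(a:ℂ)+(e:ℂ)+4)*(2*(a:ℂ)+(e:ℂ)+3)*(2*(a:ℂ)+(e:ℂ)+2)*(2*(a:ℂ)+(e:ℂ)+1)*(((a+(a+e)).factorial : ℕ) : ℂ)) / (((a:ℂ)+2)*((a:ℂ)+1)*(((a).factorial : ℕ) : ℂ)*((a:ℂ)+(e:ℂ)+4)*((a:ℂ)+(e:ℂ)+3)*((a:ℂ)+(e:ℂ)+2)*((a:ℂ)+(e:ℂ)+1)*(((a+e).factorial : ℕ) : ℂ)) := by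
        rw [show (a+1+1:ℕ) = a+2 by omega]
        rw [show (a+e+1+2+(a+1)+2:ℕ) = (a+2)+(a+e+4) by omega]
        rw [chf (a+2) (a+e+4)]
        rw [show ((a+2:ℕ))+(a+e+4) = (a+(a+e))+1+1+1+1+1+1 by omega]
        simp only [facstep]
        push_cast
        ring
      have h3 : (((a+e+1+1+1).choose (a+1) : ℕ) : ℂ) = (((a:ℂ)+(e:ℂ)+3)*((a:ℂ)+(e:ℂ)+2)*((a:ℂ)+(e:ℂ)+1)*(((a+e).factorial : ℕ) : ℂ)) / (((a:ℂ)+1)*(((a).factorial : ℕ) : ℂ)*((e:ℂ)+2)*((e:ℂ)+1)*(((e).factorial : ℕ) : ℂ)) := by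
        rw [show (a+1:ℕ) = a+1 by omega]
        rw [show (a+e+1+1+1:ℕ) = (a+1)+(e+2) by omega]
        rw [chf (a+1) (e+2)]
        rw [show ((a+1:ℕ))+(e+2) = (a+e)+1+1+1 by omega]
        rw [show (e+2:ℕ) = e+1+1 by omega]
        simp only [facstep]
        push_cast
        ring
      have h4 : (((a+e+1+1+a+2).choose (a+1) : ℕ) : ℂ) = ((2*(a:ℂ)+(e:ℂ)+4)*(2*(a:ℂ)+(e:ℂ)+3)*(2*(a:ℂ)+(e:ℂ)+2)*(2*(a:ℂ)+(e:ℂ)+1)*(((a+(a+e)).factorial : ℕ) : ℂ)) / (((a:ℂ)+1)*(((a).factorial : ℕ) : ℂ)*((a:ℂ)+(e:ℂ)+3)*((a:ℂ)+(e:ℂ)+2)*((a:ℂ)+(e:ℂ)+1)*(((a+e).factorial : ℕ) : ℂ)) := by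
        rw [show (a+1:ℕ) = a+1 by omega]
        rw [show (a+e+1+1+a+2:ℕ) = (a+1)+(a+e+3) by omega]
        rw [chf (a+1) (a+e+3)]
        rw [show ((a+1:ℕ))+(a+e+3) = (a+(a+e))+1+1+1+1 by omega]
        simp only [facstep]
        push_cast
        ring
      have h5 : (((a+e+1+1+1).choose (a+1+1) : ℕ) : ℂ) = (((a:ℂ)+(e:ℂ)+3)*((a:ℂ)+(e:ℂ)+2)*((a:ℂ)+(e:ℂ)+1)*(((a+e).factorial : ℕ) : ℂ)) / (((a:ℂ)+2)*((a:ℂ)+1)*(((a).factorial : ℕ) : ℂ)*((e:ℂ)+1)*(((e).factorial : ℕ) : ℂ)) := by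
        rw [show (a+1+1:ℕ) = a+2 by omega]
        rw [show (a+e+1+1+1:ℕ) = (a+2)+(e+1) by omega]
        rw [chf (a+2) (e+1)]
        rw [show ((a+2:ℕ))+(e+1) = (a+e)+1+1+1 by omega]
        simp only [facstep]
        push_cast
        ring
      have h6 : (((a+e+1+1+(a+1)+2).choose (a+1+1) : ℕ) : ℂ) = ((2*(a:ℂ)+(e:ℂ)+5)*(2*(a:ℂ)+(e:ℂ)+4)*(2*(a:ℂ)+(e:ℂ)+3)*(2*(a:ℂ)+(e:ℂ)+2)*(2*(a:ℂ)+(e:ℂ)+1)*(((a+(a+e)).factorial : ℕ) : ℂ)) / (((a:ℂ)+2)*((a:ℂ)+1)*(((a).factorial : ℕ) : ℂ)*((a:ℂ)+(e:ℂ)+3)*((a:ℂ)+(e:ℂ)+2)*((a:ℂ)+(e:ℂ)+1)*(((a+e).factorial : ℕ) : ℂ)) := by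
        rw [show (a+1+1:ℕ) = a+2 by omega]
        rw [show (a+e+1+1+(a+1)+2:ℕ) = (a+2)+(a+e+3) by omega]
        rw [chf (a+2) (a+e+3)]
        rw [show ((a+2:ℕ))+(a+e+3) = (a+(a+e))+1+1+1+1+1 by omega]
        simp only [facstep]
        push_cast
        ring
      have h7 : (((a+e+1+1).choose (a+1+1) : ℕ) : ℂ) = (((a:ℂ)+(e:ℂ)+2)*((a:ℂ)+(e:ℂ)+1)*(((a+e).factorial : ℕ) : ℂ)) / (((a:ℂ)+2)*((a:ℂ)+1)*(((a).factorial : ℕ) : ℂ)*(((e).factorial : ℕ) : ℂ)) := by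
        rw [show (a+1+1:ℕ) = a+2 by omega]
        rw [show (a+e+1+1:ℕ) = (a+2)+(e) by omega]
        rw [chf (a+2) (e)]
        rw [show ((a+2:ℕ))+(e) = (a+e)+1+1 by omega]
        simp only [facstep]
        push_cast
        ring
      have h8 : (((a+e+1+(a+1)+2).choose (a+1+1) : ℕ) : ℂ) = ((2*(a:ℂ)+(e:ℂ)+4)*(2*(a:ℂ)+(e:ℂ)+3)*(2*(a:ℂ)+(e:ℂ)+2)*(2*(a:ℂ)+(e:ℂ)+1)*(((a+(a+e)).factorial : ℕ) : ℂ)) / (((a:ℂ)+2)*((a:ℂ)+1)*(((a).factorial : ℕ) : ℂ)*((a:ℂ)+(e:ℂ)+2)*((a:ℂ)+(e:ℂ)+1)*(((a+e).factorial : ℕ) : ℂ)) := by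
        rw [show (a+1+1:ℕ) = a+2 by omega]
        rw [show (a+e+1+(a+1)+2:ℕ) = (a+2)+(a+e+2) by omega]
        rw [chf (a+2) (a+e+2)]
        rw [show ((a+2:ℕ))+(a+e+2) = (a+(a+e))+1+1+1+1 by omega]
        simp only [facstep]
        push_cast
        ring
      have F0 := facne (a)
      have F1 := facne (e)
      have F2 := facne (a+e)
      have F3 := facne (a+(a+e))
      have N0 : ((a:ℂ)+(e:ℂ)+1) ≠ 0 := by
        have hnz := Nat.cast_ne_zero (R := ℂ).mpr (show a+e+1 ≠ 0 by omega)
        push_cast at hnz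
        convert hnz using 1 <;> push_cast <;> ring
      have N1 : ((a:ℂ)+(e:ℂ)+2) ≠ 0 := by
        have hnz := Nat.cast_ne_zero (R := ℂ).mpr (show a+e+2 ≠ 0 by omega)
        push_cast at hnz
        convert hnz using 1 <;> push_cast <;> ring
      have N2 : ((a:ℂ)+(e:ℂ)+3) ≠ 0 := by
        have hnz := Nat.cast_ne_zero (R := ℂ).mpr (show a+e+3 ≠ 0 by omega)
        push_cast at hnz
        convert hnz using 1 <;> push_cast <;> ring
      have N3 : ((a:ℂ)+(e:ℂ)+4) ≠ 0 := by
        have hnz := Nat.cast_ne_zero (R := ℂ).mpr (show a+e+4 ≠ 0 by omega)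
        push_cast at hnz
        convert hnz using 1 <;> push_cast <;> ring
      have N4 : (2*(a:ℂ)+(e:ℂ)+1) ≠ 0 := by
        have hnz := Nat.cast_ne_zero (R := ℂ).mpr (show a+a+e+1 ≠ 0 by omega)
        push_cast at hnz
        convert hnz using 1 <;> push_cast <;> ring
      have N5 : (2*(a:ℂ)+(e:ℂ)+2) ≠ 0 := by
        have hnz := Nat.cast_ne_zero (R := ℂ).mpr (show a+a+e+2 ≠ 0 by omega)
        push_cast at hnz
        convert hnz using 1 <;> push_cast <;> ring
      have N6 : (2*(a:ℂ)+(e:ℂ)+3) ≠ 0 := by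
        have hnz := Nat.cast_ne_zero (R := ℂ).mpr (show a+a+e+3 ≠ 0 by omega)
        push_cast at hnz
        convert hnz using 1 <;> push_cast <;> ring
      have N7 : (2*(a:ℂ)+(e:ℂ)+4) ≠ 0 := by
        have hnz := Nat.cast_ne_zero (R := ℂ).mpr (show a+a+e+4 ≠ 0 by omega)
        push_cast at hnz
        convert hnz using 1 <;> push_cast <;> ring
      have N8 : (2*(a:ℂ)+(e:ℂ)+5) ≠ 0 := by
        have hnz := Nat.cast_ne_zero (R := ℂ).mpr (show a+a+e+5 ≠ 0 by omega)
        push_cast at hnz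
        convert hnz using 1 <;> push_cast <;> ring
      have N9 : (2*(a:ℂ)+(e:ℂ)+6) ≠ 0 := by
        have hnz := Nat.cast_ne_zero (R := ℂ).mpr (show a+a+e+6 ≠ 0 by omega)
        push_cast at hnz
        convert hnz using 1 <;> push_cast <;> ring
      have N10 : ((a:ℂ)+1) ≠ 0 := by
        have hnz := Nat.cast_ne_zero (R := ℂ).mpr (show a+1 ≠ 0 by omega)
        push_cast at hnz
        convert hnz using 1 <;> push_cast <;> ring
      have N11 : ((e:ℂ)+1) ≠ 0 := by
        have hnz := Nat.cast_ne_zero (R := ℂ).mpr (show e+1 ≠ 0 by omega)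
        push_cast at hnz
        convert hnz using 1 <;> push_cast <;> ring
      have N12 : ((a:ℂ)+2) ≠ 0 := by
        have hnz := Nat.cast_ne_zero (R := ℂ).mpr (show a+2 ≠ 0 by omega)
        push_cast at hnz
        convert hnz using 1 <;> push_cast <;> ring
      have N13 : ((e:ℂ)+2) ≠ 0 := by
        have hnz := Nat.cast_ne_zero (R := ℂ).mpr (show e+2 ≠ 0 by omega)
        push_cast at hnz
        convert hnz using 1 <;> push_cast <;> ring

      have hD : ((((a:ℂ)+2)*((a:ℂ)+1)*(((a).factorial : ℕ) : ℂ)*((e:ℂ)+2)*((e:ℂ)+1)*(((e).factorial : ℕ) : ℂ))*(((a:ℂ)+2)*((a:ℂ)+1)*(((a).factorial : ℕ) : ℂ)*((a:ℂ)+(e:ℂ)+4)*((a:ℂ)+(e:ℂ)+3)*((a:ℂ)+(e:ℂ)+2)*((a:ℂ)+(e:ℂ)+1)*(((a+e).factorial : ℕ) : ℂ))) ≠ 0 := by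
        apply_rules [mul_ne_zero]
      have hd34 : ((((a:ℂ)+1)*(((a).factorial : ℕ) : ℂ)*((e:ℂ)+2)*((e:ℂ)+1)*(((e).factorial : ℕ) : ℂ))*(((a:ℂ)+1)*(((a).factorial : ℕ) : ℂ)*((a:ℂ)+(e:ℂ)+3)*((a:ℂ)+(e:ℂ)+2)*((a:ℂ)+(e:ℂ)+1)*(((a+e).factorial : ℕ) : ℂ))) ≠ 0 := by
        apply_rules [mul_ne_zero]
      have hd56 : ((((a:ℂ)+2)*((a:ℂ)+1)*(((a).factorial : ℕ) : ℂ)*((e:ℂ)+1)*(((e).factorial : ℕ) : ℂ))*(((a:ℂ)+2)*((a:ℂ)+1)*(((a).factorial : ℕ) : ℂ)*((a:ℂ)+(e:ℂ)+3)*((a:ℂ)+(e:ℂ)+2)*((a:ℂ)+(e:ℂ)+1)*(((a+e).factorial : ℕ) : ℂ))) ≠ 0 := by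
        apply_rules [mul_ne_zero]
      have hd78 : ((((a:ℂ)+2)*((a:ℂ)+1)*(((a).factorial : ℕ) : ℂ)*(((e).factorial : ℕ) : ℂ))*(((a:ℂ)+2)*((a:ℂ)+1)*(((a).factorial : ℕ) : ℂ)*((a:ℂ)+(e:ℂ)+2)*((a:ℂ)+(e:ℂ)+1)*(((a+e).factorial : ℕ) : ℂ))) ≠ 0 := by
        apply_rules [mul_ne_zero]
      have G12 : (((a+e+1+2+1).choose (a+1+1) : ℕ) : ℂ) * (((a+e+1+2+(a+1)+2).choose (a+1+1) : ℕ) : ℂ) = ((((a:ℂ)+(e:ℂ)+4)*((a:ℂ)+(e:ℂ)+3)*((a:ℂ)+(e:ℂ)+2)*((a:ℂ)+(e:ℂ)+1)*(((a+e).factorial : ℕ) : ℂ))*((2*(a:ℂ)+(e:ℂ)+6)*(2*(a:ℂ)+(e:ℂ)+5)*(2*(a:ℂ)+(e:ℂ)+4)*(2*(a:ℂ)+(e:ℂ)+3)*(2*(a:ℂ)+(e:ℂ)+2)*(2*(a:ℂ)+(e:ℂ)+1)*(((a+(a+e)).factorial : ℕ) : ℂ))) / ((((a:ℂ)+2)*((a:ℂ)+1)*(((a).factorial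 : ℕ) : ℂ)*((e:ℂ)+2)*((e:ℂ)+1)*(((e).factorial : ℕ) : ℂ))*(((a:ℂ)+2)*((a:ℂ)+1)*(((a).factorial : ℕ) : ℂ)*((a:ℂ)+(e:ℂ)+4)*((a:ℂ)+(e:ℂ)+3)*((a:ℂ)+(e:ℂ)+2)*((a:ℂ)+(e:ℂ)+1)*(((a+e).factorial : ℕ) : ℂ))) := by
        rw [h1, h2, _root_.div_mul_div_comm]
      have G34 : (((a+e+1+1+1).choose (a+1) : ℕ) : ℂ) * (((a+e+1+1+a+2).choose (a+1) : ℕ) : ℂ) = ((((a:ℂ)+(e:ℂ)+3)*((a:ℂ)+(e:ℂ)+2)*((a:ℂ)+(e:ℂ)+1)*(((a+e).factorial : ℕ) : ℂ))*((2*(a:ℂ)+(e:ℂ)+4)*(2*(a:ℂ)+(e:ℂ)+3)*(2*(a:ℂ)+(e:ℂ)+2)*(2*(a:ℂ)+(e:ℂ)+1)*(((a+(a+e)).factorial : ℕ) : ℂ))*(((a:ℂ)+2)*((a:ℂ)+2)*((a:ℂ)+(e:ℂ)+4))) / ((((a:ℂ)+2)*((a:ℂ)+1)*(((a).factorial : ℕ)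 : ℂ)*((e:ℂ)+2)*((e:ℂ)+1)*(((e).factorial : ℕ) : ℂ))*(((a:ℂ)+2)*((a:ℂ)+1)*(((a).factorial : ℕ) : ℂ)*((a:ℂ)+(e:ℂ)+4)*((a:ℂ)+(e:ℂ)+3)*((a:ℂ)+(e:ℂ)+2)*((a:ℂ)+(e:ℂ)+1)*(((a+e).factorial : ℕ) : ℂ))) := by
        rw [h3, h4, _root_.div_mul_div_comm, div_eq_div_iff hd34 hD]; ring
      have G56 : (((a+e+1+1+1).choose (a+1+1) : ℕ) : ℂ) * (((a+e+1+1+(a+1)+2).choose (a+1+1) : ℕ) : ℂ) = ((((a:ℂ)+(e:ℂ)+3)*((a:ℂ)+(e:ℂ)+2)*((a:ℂ)+(e:ℂ)+1)*(((a+e).factorial : ℕ) : ℂ))*((2*(a:ℂ)+(e:ℂ)+5)*(2*(a:ℂ)+(e:ℂ)+4)*(2*(a:ℂ)+(e:ℂ)+3)*(2*(a:ℂ)+(e:ℂ)+2)*(2*(a:ℂ)+(e:ℂ)+1)*(((a+(a+e)).factorial : ℕ) : ℂ))*(((e:ℂ)+2)*((a:ℂ)+(e:ℂ)+4))) / ((((a:ℂ)+2)*((a:ℂ)+1)*(((a).factorial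 : ℕ) : ℂ)*((e:ℂ)+2)*((e:ℂ)+1)*(((e).factorial : ℕ) : ℂ))*(((a:ℂ)+2)*((a:ℂ)+1)*(((a).factorial : ℕ) : ℂ)*((a:ℂ)+(e:ℂ)+4)*((a:ℂ)+(e:ℂ)+3)*((a:ℂ)+(e:ℂ)+2)*((a:ℂ)+(e:ℂ)+1)*(((a+e).factorial : ℕ) : ℂ))) := by
        rw [h5, h6, _root_.div_mul_div_comm, div_eq_div_iff hd56 hD]; ring
      have G78 : (((a+e+1+1).choose (a+1+1) : ℕ) : ℂ) * (((a+e+1+(a+1)+2).choose (a+1+1) : ℕ) : ℂ) = ((((a:ℂ)+(e:ℂ)+2)*((a:ℂ)+(e:ℂ)+1)*(((a+e).factorial : ℕ) : ℂ))*((2*(a:ℂ)+(e:ℂ)+4)*(2*(a:ℂ)+(e:ℂ)+3)*(2*(a:ℂ)+(e:ℂ)+2)*(2*(a:ℂ)+(e:ℂ)+1)*(((a+(a+e)).factorial : ℕ) : ℂ))*(((e:ℂ)+2)*((e:ℂ)+1)*((a:ℂ)+(e:ℂ)+4)*((a:ℂ)+(e:ℂ)+3))) / ((((a:ℂ)+2)*((a:ℂ)+1)*(((a).factorial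 : ℕ) : ℂ)*((e:ℂ)+2)*((e:ℂ)+1)*(((e).factorial : ℕ) : ℂ))*(((a:ℂ)+2)*((a:ℂ)+1)*(((a).factorial : ℕ) : ℂ)*((a:ℂ)+(e:ℂ)+4)*((a:ℂ)+(e:ℂ)+3)*((a:ℂ)+(e:ℂ)+2)*((a:ℂ)+(e:ℂ)+1)*(((a+e).factorial : ℕ) : ℂ))) := by
        rw [h7, h8, _root_.div_mul_div_comm, div_eq_div_iff hd78 hD]; ring
      rw [G12, G34, G56, G78]
      simp only [← mul_div_assoc, ← add_div]
      congr 1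
      ring


/-- `P_m(x) = Σ_{k=0}^{m} C(m+1,k+1) C(m+k+2,k+1) binom(x−1,k)` where
`binom(x−1,k) = (x−1)(x−2)⋯(x−k)/k!`. -/
noncomputable def P (m : ℕ) (x : ℂ) : ℂ :=
  ∑ k ∈ range (m + 1),
    ((m + 1).choose (k + 1) : ℂ) * ((m + k + 2).choose (k + 1) : ℂ) *
      (∏ i ∈ range k, (x - (i + 1))) / (k.factorial : ℂ)

noncomputable def b (k : ℕ) (x : ℂ) : ℂ :=
  (∏ i ∈ range k, (x - (i + 1))) / (k.factorial : ℂ)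



lemma Peq (m : ℕ) (x : ℂ) : P m x = ∑ k ∈ range (m+1), c m k * b k x := by
  unfold P c b
  refine sum_congr rfl fun k _ => ?_
  rw [mul_div_assoc]

lemma xb (k : ℕ) (x : ℂ) :
    x * b k x = ((k:ℂ)+1) * b (k+1) x + ((k:ℂ)+1) * b k x := by
  unfold b
  rw [prod_range_succ, Nat.factorial_succ]
  have h1 := facne k
  have h2 : ((k:ℂ)+1) ≠ 0 := by
    have := Nat.cast_ne_zero (R := ℂ).mpr (show k+1 ≠ 0 by omega)
    push_cast at this; exact this
  field_simp
  push_cast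
  ring

lemma czero1 (n : ℕ) : c (n+1) (n+2) = 0 := by
  unfold c
  rw [Nat.choose_eq_zero_of_lt (by omega)]
  simp

lemma czero2 (n : ℕ) : c n (n+1) = 0 := by
  unfold c
  rw [Nat.choose_eq_zero_of_lt (by omega)]
  simp

lemma czero3 (n : ℕ) : c n (n+2) = 0 := by
  unfold c
  rw [Nat.choose_eq_zero_of_lt (by omega)]
  simp

lemma hx (n : ℕ) (x : ℂ) :
    x * ∑ k ∈ range (n+2), c (n+1) k * b k x
      = ∑ k ∈ range (n+3), ((k:ℂ) * c (n+1) (k-1) + ((k:ℂ)+1) * c (n+1) k) * b k x := by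
  have e1 : ∑ k ∈ range (n+3), ((k:ℂ) * c (n+1) (k-1)) * b k x
      = ∑ k ∈ range (n+2), (((k:ℂ)+1) * c (n+1) k) * b (k+1) x := by
    rw [Finset.sum_range_succ']
    push_cast
    simp
  have e2 : ∑ k ∈ range (n+3), (((k:ℂ)+1) * c (n+1) k) * b k x
      = ∑ k ∈ range (n+2), (((k:ℂ)+1) * c (n+1) k) * b k x := by
    rw [Finset.sum_range_succ, czero1]
    simp
  calc x * ∑ k ∈ range (n+2), c (n+1) k * b k x
      = ∑ k ∈ range (n+2), (((k:ℂ)+1) * c (n+1) k * b (k+1) x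
          + ((k:ℂ)+1) * c (n+1) k * b k x) := by
        rw [Finset.mul_sum]
        refine sum_congr rfl fun k _ => ?_
        have := xb k x
        linear_combination c (n+1) k * this
    _ = ∑ k ∈ range (n+3), ((k:ℂ) * c (n+1) (k-1) + ((k:ℂ)+1) * c (n+1) k) * b k x := by
        rw [sum_add_distrib, ← e1, ← e2, ← sum_add_distrib]
        refine sum_congr rfl fun k _ => ?_
        ring

theorem recurrence_P (m : ℕ) (hm : 1 ≤ m) :
    (∀ x : ℂ, ((m : ℂ) + 1) * ((m : ℂ) + 2) * P (m + 1) x =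
      2 * (2 * (m : ℂ) + 3) * x * P m x + ((m : ℂ) + 1) * ((m : ℂ) + 2) * P (m - 1) x) ∧
    (∀ x : ℂ, P 0 x = 2) ∧ (∀ x : ℂ, P 1 x = 6 * x) := by
  obtain ⟨n, rfl⟩ : ∃ n, m = n + 1 := ⟨m - 1, by omega⟩
  refine ⟨fun x => ?_, fun x => ?_, fun x => ?_⟩
  · simp only [Nat.add_sub_cancel]
    rw [Peq, Peq, Peq]
    push_cast
    simp only [show n+1+1+1 = n+3 from by omega, show n+2+1 = n+3 from by omega,
      show n+1+1 = n+2 from by omega]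
    have hr : 2*(2*((n:ℂ)+1)+3)*x*(∑ k ∈ range (n+2), c (n+1) k * b k x)
        = 2*(2*((n:ℂ)+1)+3)*(x * ∑ k ∈ range (n+2), c (n+1) k * b k x) := by ring
    rw [hr, hx n x]
    have ePn : ∑ k ∈ range (n+3), c n k * b k x
        = ∑ k ∈ range (n+1), c n k * b k x := by
      rw [Finset.sum_range_succ, Finset.sum_range_succ, czero3, czero2]
      simp
    rw [← ePn]
    rw [Finset.mul_sum, Finset.mul_sum, Finset.mul_sum, ← sum_add_distrib]
    refine sum_congr rfl fun k hk => ?_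
    have hkle : k ≤ n + 2 := by simpa using Nat.lt_succ_iff.mp (mem_range.mp hk)
    have := key n k hkle
    linear_combination b k x * this
  · unfold P; simp; norm_num
  · unfold P
    rw [Finset.sum_range_succ, Finset.sum_range_succ]
    have h6 : (4:ℕ).choose 2 = 6 := by decide
    simp [Nat.factorial, h6]
    ring
end

section
/- For all natural numbers k and j, L(binom(x−1, k) · binom(x−1, j)) = (−1)^{k+j} (k+1)·(k+1)!·(j+1)·(j+1)! / (k+j+3)!. -/
open Finset Polynomial

/-- The binomial polynomial `binom(x−1,k) = (x−1)(x−2)⋯(x−k)/k!` in `ℚ[X]`. -/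
noncomputable def binomXm1 (k : ℕ) : Polynomial ℚ :=
  ((k.factorial : ℚ))⁻¹ • ∏ i ∈ range k, (X - C ((i : ℚ) + 1))

/-- The linear functional determined by `L(x^j) = (−1)^j B_{j+2}`
(Bernoulli numbers with the convention `B₁ = −1/2`). -/
noncomputable def L (p : Polynomial ℚ) : ℚ :=
  p.sum fun j a => a * (-1) ^ j * _root_.bernoulli (j + 2)

noncomputable def bb (m : ℕ) : Polynomial ℚ :=
  ((m.factorial : ℚ))⁻¹ • ∏ i ∈ range m, (X - C (i : ℚ))

noncomputable def L0 : Polynomial ℚ →ₗ[ℚ] ℚ :=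
  Polynomial.lsum fun n => LinearMap.toSpanSingleton ℚ ℚ (bernoulli' n)

lemma L0_monomial (n : ℕ) (a : ℚ) : L0 (C a * X ^ n) = a * bernoulli' n := by
  rw [Polynomial.C_mul_X_pow_eq_monomial]
  simp [L0, Polynomial.lsum_apply, Polynomial.C_mul_X_pow_eq_monomial,
    Polynomial.sum_monomial_index, LinearMap.toSpanSingleton_apply, smul_eq_mul]

lemma L0_X_pow (n : ℕ) : L0 (X ^ n) = bernoulli' n := by
  have := L0_monomial n 1; simpa using this

lemma L0_add_one_pow (n : ℕ) : L0 ((X + 1) ^ n) = bernoulli' n + n := by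
  have h : ((X + 1 : Polynomial ℚ)) ^ n = ∑ k ∈ range (n + 1), C (n.choose k : ℚ) * X ^ k := by
    rw [add_pow]
    refine Finset.sum_congr rfl fun k hk => ?_
    rw [one_pow, mul_one, mul_comm]
    simp [Polynomial.C_eq_natCast]
  rw [h, map_sum]
  simp only [L0_monomial]
  rw [Finset.sum_range_succ, Nat.choose_self, sum_bernoulli']
  push_cast
  ring

lemma L0_funEq (p : Polynomial ℚ) :
    L0 (p.comp (X + 1)) = L0 p + p.derivative.eval 1 := by
  induction p using Polynomial.induction_on' with
  | add p q hp hq =>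
    rw [add_comp, map_add, hp, hq, map_add, derivative_add, eval_add]; ring
  | monomial n a =>
    rw [← Polynomial.C_mul_X_pow_eq_monomial]
    rw [mul_comp, C_comp, X_pow_comp]
    have : (C a : Polynomial ℚ) * (X + 1) ^ n = a • ((X + 1) ^ n) := by
      rw [Polynomial.smul_eq_C_mul]
    rw [this, map_smul, L0_add_one_pow, L0_monomial, derivative_C_mul,
      derivative_X_pow, smul_eq_mul]
    simp [mul_comm, mul_add]

lemma prod_shift (m : ℕ) :
    (∏ i ∈ range (m + 1), (X - C (i : ℚ))).comp (X + 1)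
      = (∏ i ∈ range m, (X - C (i : ℚ))) * (X + 1) := by
  rw [Polynomial.prod_comp]
  simp only [sub_comp, X_comp, C_comp]
  rw [Finset.prod_range_succ']
  have h0 : (X + 1 - C ((0:ℕ):ℚ)) = X + 1 := by simp
  rw [h0]
  congr 1
  refine Finset.prod_congr rfl fun i _ => ?_
  rw [Nat.cast_add, Nat.cast_one, map_add, map_one]
  ring

lemma bb_comp (m : ℕ) : (bb (m + 1)).comp (X + 1) = bb (m + 1) + bb m := by
  unfold bb
  rw [Polynomial.smul_comp, prod_shift]
  rw [Finset.prod_range_succ]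
  have hm : ((m + 1).factorial : ℚ) = (m.factorial : ℚ) * (m + 1) := by
    rw [Nat.factorial_succ]; push_cast; ring
  have hne : (m.factorial : ℚ) ≠ 0 := Nat.cast_ne_zero.mpr m.factorial_ne_zero
  have hne1 : ((m:ℚ) + 1) ≠ 0 := by positivity
  have key : (∏ x ∈ range m, (X - C (x:ℚ))) * (X + 1)
      = (∏ x ∈ range m, (X - C (x:ℚ))) * (X - C (m:ℚ)) + ((m:ℚ) + 1) • ∏ x ∈ range m, (X - C (x:ℚ)) := by
    rw [Polynomial.smul_eq_C_mul, map_add, map_one]; ring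
  rw [key, smul_add, smul_smul]
  congr 2
  rw [hm]
  field_simp

lemma bb_eval_one (m : ℕ) : (bb (m + 2)).eval 1 = 0 := by
  unfold bb
  rw [eval_smul, Polynomial.eval_prod, smul_eq_mul]
  rw [Finset.prod_eq_zero (i := 1) (by simp) (by simp)]
  simp

lemma E_prod (m : ℕ) :
    ∏ j ∈ (range (m + 2)).erase 1, ((1 : ℚ) - (j : ℚ)) = (-1) ^ m * m.factorial := by
  induction m with
  | zero =>
    have : (range 2).erase 1 = {0} := by decide
    rw [this]
    simp
  | succ m ih =>
    have hset : (range (m + 3)).erase 1 = insert (m + 2) ((range (m + 2)).erase 1) := by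
      rw [Finset.range_add_one, Finset.erase_insert_of_ne (by omega)]
    rw [hset, Finset.prod_insert (by simp), ih]
    rw [Nat.factorial_succ]
    push_cast
    ring

lemma bb_deriv_eval_one (m : ℕ) :
    (bb (m + 2)).derivative.eval 1 = (-1) ^ m * (m.factorial : ℚ) / ((m + 2).factorial : ℚ) := by
  unfold bb
  have hsplit : ∏ i ∈ range (m + 2), (X - C (i : ℚ))
      = (X - C ((1 : ℕ) : ℚ)) * ∏ j ∈ (range (m + 2)).erase 1, (X - C (j : ℚ)) :=
    (Finset.mul_prod_erase _ _ (by simp)).symm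
  rw [derivative_smul, eval_smul, hsplit, derivative_mul, eval_add, eval_mul, eval_mul,
    Polynomial.eval_prod]
  simp only [derivative_sub, derivative_X, derivative_C, sub_zero, eval_one, eval_sub, eval_X,
    eval_C, Nat.cast_one, sub_self, zero_mul, one_mul, add_zero, smul_eq_mul]
  rw [E_prod]
  ring

lemma L0_bb (m : ℕ) :
    L0 (bb (m + 1)) = (-1) ^ m * (m.factorial : ℚ) / ((m + 2).factorial : ℚ) := by
  have h := L0_funEq (bb (m + 2))
  rw [bb_comp (m + 1), map_add, bb_deriv_eval_one m] at h
  linarith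

lemma X_mul_bb (b : ℕ) :
    X * bb (b + 1) = ((b : ℚ) + 2) • bb (b + 2) + ((b : ℚ) + 1) • bb (b + 1) := by
  unfold bb
  rw [Finset.prod_range_succ (n := b + 1)]
  have key : X * ((b + 1).factorial : ℚ)⁻¹ • ∏ i ∈ range (b + 1), (X - C (i : ℚ))
      = ((b + 1).factorial : ℚ)⁻¹ •
          ((∏ i ∈ range (b + 1), (X - C (i : ℚ))) * (X - C ((b + 1 : ℕ) : ℚ))
            + ((b : ℚ) + 1) • ∏ i ∈ range (b + 1), (X - C (i : ℚ))) := by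
    rw [smul_add, Polynomial.smul_eq_C_mul ((b : ℚ) + 1), mul_smul_comm]
    rw [← smul_add]
    congr 1
    push_cast [map_add, map_one]
    ring
  rw [key, smul_add, smul_smul, smul_smul, smul_smul]
  congr 2
  · rw [Nat.factorial_succ (b + 1)]
    push_cast
    have h1 : ((b + 1).factorial : ℚ) ≠ 0 := Nat.cast_ne_zero.mpr (Nat.factorial_ne_zero _)
    field_simp
    ring
  · have h1 : ((b + 1).factorial : ℚ) ≠ 0 := Nat.cast_ne_zero.mpr (Nat.factorial_ne_zero _)
    rw [Nat.factorial_succ b]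
    push_cast
    have h2 : (b.factorial : ℚ) ≠ 0 := Nat.cast_ne_zero.mpr (Nat.factorial_ne_zero _)
    field_simp

lemma fac_ne (n : ℕ) : ((n.factorial : ℚ)) ≠ 0 := Nat.cast_ne_zero.mpr (Nat.factorial_ne_zero _)

lemma G_main (a : ℕ) : ∀ b : ℕ,
    L0 (bb (a + 1) * bb (b + 1)) =
      (-1) ^ (a + b) * (((a + 1).factorial : ℚ)) * ((b + 1).factorial : ℚ)
        / ((a + b + 3).factorial : ℚ) := by
  induction a with
  | zero =>
    intro b
    have hbb1 : bb 1 = X := by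
      unfold bb; simp
    rw [hbb1, X_mul_bb, map_add, map_smul, map_smul, L0_bb (b + 1), L0_bb b]
    have e1 : (b + 1 + 2) = (b + 2) + 1 := by omega
    have e2 : (0 + b + 3) = ((b + 2) + 1) := by omega
    rw [e1, e2]
    simp only [Nat.factorial_succ]
    push_cast
    have hb := fac_ne b
    have hb1 : ((b : ℚ) + 1) ≠ 0 := by positivity
    have hb2 : ((b : ℚ) + 2) ≠ 0 := by positivity
    have hb3 : ((b : ℚ) + 3) ≠ 0 := by positivity
    have hb2' : ((b : ℚ) + 1 + 1) ≠ 0 := by positivity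
    have hb3' : ((b : ℚ) + 2 + 1) ≠ 0 := by positivity
    simp only [smul_eq_mul]
    field_simp
    ring
  | succ a ih =>
    intro b
    have h := L0_funEq (bb (a + 2) * bb (b + 2))
    have hd : (bb (a + 2) * bb (b + 2)).derivative.eval 1 = 0 := by
      rw [derivative_mul, eval_add, eval_mul, eval_mul, bb_eval_one a, bb_eval_one b]
      ring
    rw [hd, add_zero, mul_comp, bb_comp (a + 1), bb_comp (b + 1)] at h
    have hexp : (bb (a + 2) + bb (a + 1)) * (bb (b + 2) + bb (b + 1))
        = bb (a + 2) * bb (b + 2) + (bb (a + 2) * bb (b + 1)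
          + (bb (a + 1) * bb (b + 2) + bb (a + 1) * bb (b + 1))) := by ring
    rw [hexp, map_add, map_add, map_add] at h
    have key : L0 (bb (a + 2) * bb (b + 1))
        = -(L0 (bb (a + 1) * bb (b + 2)) + L0 (bb (a + 1) * bb (b + 1))) := by
      linarith
    show L0 (bb (a + 2) * bb (b + 1)) = _
    rw [key, ih (b + 1), ih b]
    have e1 : (a + (b + 1)) = (a + b) + 1 := by omega
    have e2 : (a + b + 1 + 3) = (a + b + 3) + 1 := by omega
    have e3 : (a + 1 + b) = (a + b) + 1 := by omega
    have e4 : (a + b + 1 + 3) = (a + b + 3) + 1 := by omega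
    have e5 : (b + 1 + 1) = (b + 1) + 1 := by omega
    have e6 : (a + 1 + 1) = (a + 1) + 1 := by omega
    rw [e1, e2, e3, e4, e5, e6, Nat.factorial_succ (a + b + 3), Nat.factorial_succ (b + 1),
      Nat.factorial_succ (a + 1), pow_succ]
    push_cast
    have h1 := fac_ne (a + b + 3)
    have h2 : ((a : ℚ) + b + 3 + 1) ≠ 0 := by positivity
    field_simp
    ring

lemma L_eq_L0 (p : Polynomial ℚ) : L p = L0 (X ^ 2 * p) := by
  induction p using Polynomial.induction_on' with
  | add p q hp hq =>
    have hL : L (p + q) = L p + L q := by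
      unfold L
      exact Polynomial.sum_add_index p q _ (fun i => by ring) (fun i x y => by ring)
    rw [hL, hp, hq, mul_add, map_add]
  | monomial n a =>
    have h1 : L (monomial n a) = a * (-1) ^ n * _root_.bernoulli (n + 2) := by
      unfold L
      exact Polynomial.sum_monomial_index a _ (by ring)
    have h2 : (X : Polynomial ℚ) ^ 2 * monomial n a = C a * X ^ (n + 2) := by
      rw [← Polynomial.C_mul_X_pow_eq_monomial, pow_add]
      ring
    rw [h1, h2, L0_monomial, bernoulli'_eq_bernoulli]
    have : ((-1 : ℚ)) ^ (n + 2) = (-1) ^ n := by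
      rw [pow_add]; norm_num
    rw [this]
    ring

lemma X_mul_binomXm1 (k : ℕ) : X * binomXm1 k = ((k : ℚ) + 1) • bb (k + 1) := by
  unfold binomXm1 bb
  have hprod : ∏ i ∈ range (k + 1), (X - C (i : ℚ))
      = (∏ i ∈ range k, (X - C ((i : ℚ) + 1))) * X := by
    rw [Finset.prod_range_succ']
    congr 1
    · refine Finset.prod_congr rfl fun i _ => by push_cast; ring
    · simp
  rw [hprod, smul_smul]
  rw [mul_smul_comm]
  rw [mul_comm (∏ i ∈ range k, (X - C ((i : ℚ) + 1))) X]
  congr 1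
  rw [Nat.factorial_succ]
  push_cast
  have h1 := fac_ne k
  have h2 : ((k : ℚ) + 1) ≠ 0 := by positivity
  field_simp

theorem L_binomXm1_mul_binomXm1 (k j : ℕ) :
    L (binomXm1 k * binomXm1 j) =
      (-1) ^ (k + j) * (k + 1) * ((k + 1).factorial : ℚ) * (j + 1) *
        ((j + 1).factorial : ℚ) / ((k + j + 3).factorial : ℚ) := by
  rw [L_eq_L0]
  have hX : (X : Polynomial ℚ) ^ 2 * (binomXm1 k * binomXm1 j)
      = (((k : ℚ) + 1) * ((j : ℚ) + 1)) • (bb (k + 1) * bb (j + 1)) := by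
    have : (X : Polynomial ℚ) ^ 2 * (binomXm1 k * binomXm1 j)
        = (X * binomXm1 k) * (X * binomXm1 j) := by ring
    rw [this, X_mul_binomXm1, X_mul_binomXm1, smul_mul_smul_comm]
  rw [hX, map_smul, G_main k j, smul_eq_mul]
  ring
end

section
/- For every integer k ≥ 1, the following identity of polynomials in the two variables x and t holds: binom(x−1, k) − binom(t−1, k) = (x − t) · Σ_{i=1}^{k} ( binom(t−i−1, k−i) / (i · C(k, i)) ) · binom(x−1, i−1). -/
open Finset

/-- The binomial polynomial `binom(y,k) = y(y−1)⋯(y−k+1)/k!` evaluated at `y : ℚ`. -/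
noncomputable def bin (y : ℚ) (k : ℕ) : ℚ :=
  (∏ i ∈ range k, (y - i)) / (k.factorial : ℚ)

lemma bin_succ (y : ℚ) (n : ℕ) : bin y (n+1) = bin y n * (y - n) / (n+1) := by
  have h1 : ((n.factorial : ℚ)) ≠ 0 := by exact_mod_cast n.factorial_ne_zero
  have h2 : ((n:ℚ)+1) ≠ 0 := by positivity
  simp only [bin, prod_range_succ, Nat.factorial_succ]
  push_cast
  rw [div_mul_eq_mul_div, div_div, mul_comm ((n:ℚ)+1)]

lemma bin_succ' (y : ℚ) (n : ℕ) : bin y (n+1) = y * bin (y-1) n / (n+1) := by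
  have h1 : ((n.factorial : ℚ)) ≠ 0 := by exact_mod_cast n.factorial_ne_zero
  have h2 : ((n:ℚ)+1) ≠ 0 := by positivity
  have hp : ∏ i ∈ range (n+1), (y - i) = (∏ i ∈ range n, (y - 1 - i)) * y := by
    rw [prod_range_succ']
    congr 1
    · apply prod_congr rfl; intro i _; push_cast; ring
    · simp
  simp only [bin, hp, Nat.factorial_succ]
  push_cast
  rw [mul_comm ((n:ℚ)+1), ← div_div, mul_comm (∏ i ∈ range n, (y - 1 - (i:ℚ))) y, mul_div_assoc]

theorem binom_difference_identity (k : ℕ) (hk : 1 ≤ k) (x t : ℚ) :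
    bin (x - 1) k - bin (t - 1) k =
      (x - t) * ∑ i ∈ Icc 1 k,
        bin (t - i - 1) (k - i) / ((i : ℚ) * (k.choose i : ℚ)) * bin (x - 1) (i - 1) := by
  set T : ℕ → ℚ := fun i => bin (x-1) i * bin (t - i - 1) (k - i) / (k.choose i : ℚ) with hT
  have key : ∀ i ∈ Icc 1 k,
      (x - t) * (bin (t - i - 1) (k - i) / ((i : ℚ) * (k.choose i : ℚ)) * bin (x - 1) (i - 1))
        = T i - T (i-1) := by
    intro i hi
    rw [mem_Icc] at hi
    obtain ⟨j, rfl⟩ : ∃ j, i = j + 1 := ⟨i - 1, by omega⟩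
    obtain ⟨m, rfl⟩ : ∃ m, k = j + 1 + m := ⟨k - (j+1), by omega⟩
    have e1 : j + 1 + m - (j + 1) = m := by omega
    have e2 : j + 1 - 1 = j := by omega
    have e3 : j + 1 + m - j = m + 1 := by omega
    have hC : ((j+1+m).choose (j+1) : ℚ) * ((j:ℚ)+1) = ((j+1+m).choose j : ℚ) * ((m:ℚ)+1) := by
      have := Nat.choose_succ_right_eq (j+1+m) j
      have h' : (j+1+m).choose (j+1) * (j+1) = (j+1+m).choose j * (m+1) := by
        rw [this, e3]
      exact_mod_cast h'
    have hC1 : ((j+1+m).choose (j+1) : ℚ) ≠ 0 := by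
      exact_mod_cast (Nat.choose_pos (by omega)).ne'
    have hC2 : ((j+1+m).choose j : ℚ) ≠ 0 := by
      exact_mod_cast (Nat.choose_pos (by omega)).ne'
    have hj1 : ((j:ℚ)+1) ≠ 0 := by positivity
    have hm1 : ((m:ℚ)+1) ≠ 0 := by positivity
    simp only [hT, e1, e2, e3]
    rw [bin_succ (x-1) j, bin_succ' (t - (j:ℚ) - 1) m]
    push_cast
    have harg : t - ((j:ℚ)+1) - 1 = (t - (j:ℚ) - 1) - 1 := by ring
    rw [harg]
    field_simp
    linear_combination (bin (x-1) j * bin (t - (j:ℚ) - 1 - 1) m * (t - (j:ℚ) - 1)) * hC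
  rw [Finset.mul_sum, Finset.sum_congr rfl key]
  have htel : ∑ i ∈ Icc 1 k, (T i - T (i-1)) = T k - T 0 := by
    rw [show Icc 1 k = Ico 1 (k+1) by rfl]
    rw [Finset.sum_Ico_eq_sum_range]
    simp only [Nat.add_sub_cancel]
    have : ∀ i ∈ range k, T (1 + i) - T (1 + i - 1) = T (i+1) - T i := by
      intro i _; congr 2 <;> omega
    rw [Finset.sum_congr rfl this, Finset.sum_range_sub]
  rw [htel]
  simp only [hT]
  simp [bin, Nat.choose_self, Nat.sub_self]
end

section
/- For every natural number k, M( binom(x−1, k) · binom(x+k, k) ) = (−1)^{k+1} (k+1)² / ( 2(k+3)(k+2) ). -/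
open Finset Polynomial

/-- The binomial polynomial `binom(x+k,k) = (x+k)(x+k−1)⋯(x+1)/k!` in `ℚ[X]`. -/
noncomputable def binomXpk (k : ℕ) : Polynomial ℚ :=
  ((k.factorial : ℚ))⁻¹ • ∏ i ∈ range k, (X + C ((i : ℚ) + 1))

/-- The linear functional determined by `M(x^j) = (−1)^j B_{j+4} (j+5)/2`
(Bernoulli numbers with the convention `B₁ = −1/2`). -/
noncomputable def M (p : Polynomial ℚ) : ℚ :=
  p.sum fun j a => a * (-1) ^ j * _root_.bernoulli (j + 4) * ((j : ℚ) + 5) / 2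

namespace MBinomAux

/-- The umbral functional with moments `bernoulli' j = (-1)^j bernoulli j`. -/
noncomputable def Fb : Polynomial ℚ →ₗ[ℚ] ℚ :=
  Polynomial.lsum fun j => (bernoulli' j : ℚ) • (LinearMap.id : ℚ →ₗ[ℚ] ℚ)

lemma Fb_monomial (n : ℕ) (a : ℚ) : Fb (monomial n a) = bernoulli' n * a := by
  simp [Fb, Polynomial.sum_monomial_index, smul_eq_mul]

lemma Fb_shift (p : Polynomial ℚ) :
    Fb (p.comp (X + 1)) = Fb p + p.derivative.eval 1 := by
  induction p using Polynomial.induction_on' with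
  | add p q hp hq =>
    simp only [add_comp, map_add, hp, hq, derivative_add, eval_add]; ring
  | monomial n a =>
    have hexp : ((monomial n a : Polynomial ℚ)).comp (X + 1)
        = ∑ i ∈ range (n + 1), monomial i (a * (n.choose i : ℚ)) := by
      rw [monomial_comp, add_pow, Finset.mul_sum]
      refine Finset.sum_congr rfl fun i hi => ?_
      rw [one_pow, mul_one, ← C_mul_X_pow_eq_monomial, C_mul, ← C_eq_natCast]
      ring
    rw [hexp, map_sum]
    simp only [Fb_monomial]
    rw [Finset.sum_range_succ]
    have hsum : ∑ i ∈ range n, bernoulli' i * (a * (n.choose i : ℚ))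
        = a * (n : ℚ) := by
      rw [← sum_bernoulli' n, Finset.mul_sum]
      exact Finset.sum_congr rfl fun i _ => by ring
    rw [hsum, Nat.choose_self, derivative_monomial, eval_monomial]
    push_cast
    ring

lemma M_add (p q : Polynomial ℚ) : M (p + q) = M p + M q := by
  unfold M
  rw [Polynomial.sum_add_index]
  · intro i; simp
  · intro i b c; ring

lemma M_monomial (n : ℕ) (a : ℚ) :
    M (monomial n a) = a * (-1) ^ n * _root_.bernoulli (n + 4) * ((n : ℚ) + 5) / 2 := by
  unfold M
  exact Polynomial.sum_monomial_index a _ (by simp)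

lemma M_apply_eq (p : Polynomial ℚ) : M p = Fb (derivative (X ^ 5 * p)) / 2 := by
  induction p using Polynomial.induction_on' with
  | add p q hp hq =>
    rw [M_add, hp, hq, mul_add, derivative_add, map_add]; ring
  | monomial n a =>
    have h1 : (X : Polynomial ℚ) ^ 5 * monomial n a = monomial (n + 5) a := by
      rw [← C_mul_X_pow_eq_monomial, ← C_mul_X_pow_eq_monomial]; ring
    rw [M_monomial, h1, derivative_monomial, Fb_monomial, bernoulli'_eq_bernoulli]
    have h2 : n + 5 - 1 = n + 4 := rfl
    rw [h2]
    have h3 : ((-1 : ℚ)) ^ (n + 4) = (-1) ^ n := by rw [pow_add]; norm_num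
    rw [h3]
    push_cast
    ring

lemma M_of_delta (p G : Polynomial ℚ) (d : ℚ) (hd : d ≠ 0)
    (h : G.comp (X + 1) - G = C d * (X ^ 5 * p)) :
    M p = (derivative (derivative G)).eval 1 / (2 * d) := by
  have h2 : Fb (derivative (C d * (X ^ 5 * p))) = (derivative (derivative G)).eval 1 := by
    rw [← h, derivative_sub, derivative_comp]
    simp only [derivative_add, derivative_X, derivative_one, add_zero, one_mul]
    rw [map_sub, Fb_shift]
    ring
  have h3 : Fb (derivative (C d * (X ^ 5 * p))) = d * Fb (derivative (X ^ 5 * p)) := by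
    rw [derivative_C_mul, ← smul_eq_C_mul, map_smul, smul_eq_mul]
  rw [h3] at h2
  rw [M_apply_eq]
  rw [← h2]
  field_simp

/-- `Φ_m(t) = ∏_{i=0}^{m-1} (t - i(i+1))`. -/
noncomputable def Phi (m : ℕ) : Polynomial ℚ :=
  ∏ i ∈ range m, (X - C ((i : ℚ) * ((i : ℚ) + 1)))

lemma Phi_succ (m : ℕ) :
    Phi (m + 1) = Phi m * (X - C ((m : ℚ) * ((m : ℚ) + 1))) := by
  rw [Phi, Phi, prod_range_succ]

lemma Phi_comp_add (m : ℕ) :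
    (Phi m).comp (X ^ 2 + X)
      = ∏ i ∈ range m, ((X + C ((i : ℚ) + 1)) * (X - C (i : ℚ))) := by
  rw [Phi, Polynomial.prod_comp]
  refine Finset.prod_congr rfl fun i _ => ?_
  simp only [sub_comp, X_comp, C_comp]
  simp only [map_mul, map_add, map_one]
  ring

lemma Phi_comp_sub (m : ℕ) :
    (Phi m).comp (X ^ 2 - X)
      = ∏ i ∈ range m, ((X - C ((i : ℚ) + 1)) * (X + C (i : ℚ))) := by
  rw [Phi, Polynomial.prod_comp]
  refine Finset.prod_congr rfl fun i _ => ?_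
  simp only [sub_comp, X_comp, C_comp]
  simp only [map_mul, map_add, map_one]
  ring

lemma Phi_delta (l : ℕ) :
    (Phi (l + 1)).comp (X ^ 2 + X) - (Phi (l + 1)).comp (X ^ 2 - X)
      = C (2 * ((l : ℚ) + 1)) * X *
        ((∏ i ∈ range l, (X - C ((i : ℚ) + 1))) * (∏ i ∈ range l, (X + C ((i : ℚ) + 1)))) := by
  rw [Phi_comp_add, Phi_comp_sub, prod_mul_distrib, prod_mul_distrib,
    prod_range_succ, prod_range_succ']
  rw [prod_range_succ (fun i => (X : Polynomial ℚ) - C ((i : ℚ) + 1)) l,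
    prod_range_succ' (fun i => (X : Polynomial ℚ) + C (i : ℚ)) l]
  push_cast
  simp only [Nat.cast_zero, map_zero, map_add, map_mul, map_one, map_ofNat]
  ring

lemma Phi_coeff0 (m : ℕ) : (Phi (m + 1)).coeff 0 = 0 := by
  induction m with
  | zero => simp [Phi]
  | succ m ih =>
    rw [Phi_succ, mul_coeff_zero, ih, zero_mul]

lemma Phi_coeff1 (m : ℕ) :
    (Phi (m + 1)).coeff 1 = (-1) ^ m * ((m + 1).factorial : ℚ) * (m.factorial : ℚ) := by
  induction m with
  | zero => simp [Phi]
  | succ m ih =>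
    rw [Phi_succ, mul_sub, coeff_sub, coeff_mul_X, coeff_mul_C, ih, Phi_coeff0]
    push_cast [Nat.factorial_succ]
    ring

lemma Phi_coeff2 (m : ℕ) :
    (Phi (m + 1)).coeff 2 = (-1) ^ (m + 1) * (m : ℚ) * (m.factorial : ℚ) ^ 2 := by
  induction m with
  | zero => simp [Phi, coeff_X]
  | succ m ih =>
    rw [Phi_succ, mul_sub, coeff_sub, coeff_mul_X, coeff_mul_C, ih, Phi_coeff1]
    push_cast [Nat.factorial_succ]
    ring

end MBinomAux

open MBinomAux in
theorem M_binom_mul_binom (k : ℕ) :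
    M (binomXm1 k * binomXpk k) =
      (-1) ^ (k + 1) * ((k : ℚ) + 1) ^ 2 / (2 * ((k : ℚ) + 3) * ((k : ℚ) + 2)) := by
  have hf : ((k.factorial : ℚ)) ≠ 0 := Nat.cast_ne_zero.mpr k.factorial_ne_zero
  have h1 : (k : ℚ) + 1 ≠ 0 := by positivity
  have h2 : (k : ℚ) + 2 ≠ 0 := by positivity
  have h3 : (k : ℚ) + 3 ≠ 0 := by positivity
  set κ : ℚ := (k : ℚ) with hκ
  set u : ℚ := (κ + 1) ^ 4 * (κ + 2) * (κ + 3) with hu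
  set v : ℚ := ((κ + 1) ^ 2 + (κ + 2) ^ 2) * (κ + 1) * (κ + 3) with hv
  set w : ℚ := (κ + 1) * (κ + 2) with hw
  let ψ : Polynomial ℚ := C u * Phi (k + 1) + C v * Phi (k + 2) + C w * Phi (k + 3)
  let G : Polynomial ℚ := ψ.comp (X ^ 2 - X)
  set d : ℚ := 2 * (κ + 1) * (κ + 2) * (κ + 3) * ((k.factorial : ℚ)) ^ 2 with hd
  have hdne : d ≠ 0 := by rw [hd]; positivity
  have hcomp : G.comp (X + 1) = ψ.comp (X ^ 2 + X) := by
    show (ψ.comp (X ^ 2 - X)).comp (X + 1) = _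
    rw [comp_assoc]
    congr 1
    simp only [sub_comp, pow_comp, X_comp]
    ring
  have hdelta : G.comp (X + 1) - G = C d * (X ^ 5 * (binomXm1 k * binomXpk k)) := by
    rw [hcomp]
    show ψ.comp (X ^ 2 + X) - ψ.comp (X ^ 2 - X) = _
    have key : ψ.comp (X ^ 2 + X) - ψ.comp (X ^ 2 - X)
        = C u * ((Phi (k+1)).comp (X^2+X) - (Phi (k+1)).comp (X^2-X))
        + C v * ((Phi (k+2)).comp (X^2+X) - (Phi (k+2)).comp (X^2-X))
        + C w * ((Phi (k+3)).comp (X^2+X) - (Phi (k+3)).comp (X^2-X)) := by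
      show (C u * Phi (k + 1) + C v * Phi (k + 2) + C w * Phi (k + 3)).comp (X ^ 2 + X)
          - (C u * Phi (k + 1) + C v * Phi (k + 2) + C w * Phi (k + 3)).comp (X ^ 2 - X) = _
      simp only [add_comp, mul_comp, C_comp]
      ring
    have e1 := Phi_delta k
    have e2 := Phi_delta (k + 1)
    have e3 := Phi_delta (k + 2)
    rw [prod_range_succ, prod_range_succ] at e2
    rw [prod_range_succ, prod_range_succ, prod_range_succ, prod_range_succ] at e3
    push_cast at e2 e3
    rw [key, e1, e2, e3]
    have hrhs : C d * (X ^ 5 * (binomXm1 k * binomXpk k))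
        = C (2 * (κ + 1) * (κ + 2) * (κ + 3)) *
            (X ^ 5 * ((∏ i ∈ range k, (X - C ((i : ℚ) + 1))) *
              (∏ i ∈ range k, (X + C ((i : ℚ) + 1))))) := by
      have ha : (C d : Polynomial ℚ) * (C ((k.factorial : ℚ))⁻¹) * (C ((k.factorial : ℚ))⁻¹)
          = C (2 * (κ + 1) * (κ + 2) * (κ + 3)) := by
        rw [← C_mul, ← C_mul]
        congr 1
        rw [hd]
        field_simp
      rw [binomXm1, binomXpk, smul_eq_C_mul, smul_eq_C_mul, ← ha]
      ring
    rw [hrhs]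
    show C u * _ + C v * _ + C w * _ = _
    rw [hu, hv, hw]
    simp only [map_add, map_mul, map_pow, map_one, map_ofNat]
    ring
  have hM := M_of_delta (binomXm1 k * binomXpk k) G d hdne hdelta
  rw [hM]
  -- compute the second derivative of G at 1
  have hd1 : (derivative ψ).eval 0 = ψ.coeff 1 := by
    rw [← coeff_zero_eq_eval_zero, coeff_derivative]
    push_cast; ring
  have hd2 : (derivative (derivative ψ)).eval 0 = 2 * ψ.coeff 2 := by
    rw [← coeff_zero_eq_eval_zero, coeff_derivative, coeff_derivative]
    push_cast; ring
  have hval : (derivative (derivative G)).eval 1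
      = 2 * ψ.coeff 1 + 2 * ψ.coeff 2 := by
    show (derivative (derivative (ψ.comp (X ^ 2 - X)))).eval 1 = _
    rw [derivative_comp, derivative_mul, derivative_comp]
    rw [eval_add, eval_mul, eval_mul, eval_mul, eval_comp, eval_comp]
    have h10 : ((X : Polynomial ℚ) ^ 2 - X).eval 1 = 0 := by simp
    rw [h10, hd1, hd2]
    simp
    ring
    exact Or.inl trivial
  rw [hval]
  have hc1 : ψ.coeff 1
      = u * ((-1 : ℚ) ^ k * ((k + 1).factorial : ℚ) * (k.factorial : ℚ))
      + v * ((-1 : ℚ) ^ (k + 1) * ((k + 2).factorial : ℚ) * ((k + 1).factorial : ℚ))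
      + w * ((-1 : ℚ) ^ (k + 2) * ((k + 3).factorial : ℚ) * ((k + 2).factorial : ℚ)) := by
    show (C u * Phi (k + 1) + C v * Phi (k + 2) + C w * Phi (k + 3)).coeff 1 = _
    rw [coeff_add, coeff_add, coeff_C_mul, coeff_C_mul, coeff_C_mul,
      Phi_coeff1 k, Phi_coeff1 (k + 1), Phi_coeff1 (k + 2)]
  have hc2 : ψ.coeff 2
      = u * ((-1 : ℚ) ^ (k + 1) * κ * ((k.factorial : ℚ)) ^ 2)
      + v * ((-1 : ℚ) ^ (k + 2) * (κ + 1) * (((k + 1).factorial : ℚ)) ^ 2)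
      + w * ((-1 : ℚ) ^ (k + 3) * (κ + 2) * (((k + 2).factorial : ℚ)) ^ 2) := by
    show (C u * Phi (k + 1) + C v * Phi (k + 2) + C w * Phi (k + 3)).coeff 2 = _
    rw [coeff_add, coeff_add, coeff_C_mul, coeff_C_mul, coeff_C_mul,
      Phi_coeff2 k, Phi_coeff2 (k + 1), Phi_coeff2 (k + 2)]
    push_cast
    ring
  have hf1 : ((k + 1).factorial : ℚ) = (κ + 1) * (k.factorial : ℚ) := by
    rw [Nat.factorial_succ]; push_cast; ring
  have hf2 : ((k + 2).factorial : ℚ) = (κ + 2) * (κ + 1) * (k.factorial : ℚ) := by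
    rw [Nat.factorial_succ]; push_cast; rw [hf1]; ring
  have hf3 : ((k + 3).factorial : ℚ) = (κ + 3) * (κ + 2) * (κ + 1) * (k.factorial : ℚ) := by
    rw [Nat.factorial_succ]; push_cast; rw [hf2]; ring
  rw [hc1, hc2, hf1, hf2, hf3, hd, hu, hv, hw]
  simp only [pow_add, pow_one]
  field_simp
  ring
end

section
/- For all integers k ≥ 1 and 1 ≤ i ≤ k, the integer i · C(k, i) divides d_k = lcm(1, 2, …, k); equivalently d_k / (i · C(k, i)) is a positive integer. -/
open Finset

private lemma key_emult {p k i : ℕ} (hp : p.Prime) (hi0 : i ≠ 0) (hik : i ≤ k) :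
    emultiplicity p (i * k.choose i) ≤ (Nat.log p k : ℕ∞) := by
  rw [hp.emultiplicity_mul,
    Nat.emultiplicity_eq_card_pow_dvd hp.ne_one hi0.bot_lt
      (Nat.lt_succ_of_le (Nat.log_mono_right hik)),
    hp.emultiplicity_choose hik (Nat.lt_succ_self _), ← Nat.cast_add, Nat.cast_le]
  have hdisj :
      Disjoint {j ∈ Ico 1 (Nat.log p k).succ | p ^ j ∣ i}
        {j ∈ Ico 1 (Nat.log p k).succ | p ^ j ≤ i % p ^ j + (k - i) % p ^ j} := by
    simp +contextual [Finset.disjoint_left, Nat.dvd_iff_mod_eq_zero,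
      Nat.mod_lt _ (pow_pos hp.pos _)]
  calc {j ∈ Ico 1 (Nat.log p k).succ | p ^ j ∣ i}.card +
        {j ∈ Ico 1 (Nat.log p k).succ | p ^ j ≤ i % p ^ j + (k - i) % p ^ j}.card
      = ({j ∈ Ico 1 (Nat.log p k).succ | p ^ j ∣ i} ∪
          {j ∈ Ico 1 (Nat.log p k).succ | p ^ j ≤ i % p ^ j + (k - i) % p ^ j}).card := by
        rw [Finset.card_union_of_disjoint hdisj]
    _ ≤ (Ico 1 (Nat.log p k).succ).card := by
        apply Finset.card_le_card
        intro x hx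
        rcases Finset.mem_union.1 hx with h | h
        · exact (Finset.mem_filter.1 h).1
        · exact (Finset.mem_filter.1 h).1
    _ = Nat.log p k := by rw [Nat.card_Ico]; omega

private lemma key_fact {p k i : ℕ} (hp : p.Prime) (hi0 : i ≠ 0) (hik : i ≤ k) :
    (i * k.choose i).factorization p ≤ Nat.log p k := by
  have hpos : 0 < i * k.choose i :=
    Nat.mul_pos hi0.bot_lt (Nat.choose_pos hik)
  rw [Nat.factorization_def _ hp, @padicValNat_def _ ⟨hp⟩ _ hpos.ne',
    ← Nat.cast_le (α := ℕ∞), ← FiniteMultiplicity.emultiplicity_eq_multiplicity]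
  · exact key_emult hp hi0 hik
  · exact Nat.finiteMultiplicity_iff.2 ⟨hp.ne_one, hpos⟩

theorem mul_choose_dvd_lcm (k i : ℕ) (hk : 1 ≤ k) (hi : 1 ≤ i) (hik : i ≤ k) :
    (i * k.choose i) ∣ (Icc 1 k).lcm id := by
  have hne : i * k.choose i ≠ 0 :=
    (Nat.mul_pos hi (Nat.choose_pos hik)).ne'
  have hL0 : (Icc 1 k).lcm id ≠ 0 := by
    rw [Ne, Finset.lcm_eq_zero_iff]
    rintro ⟨x, hx, rfl⟩
    simp only [mem_coe, mem_Icc] at hx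
    omega
  rw [← Nat.factorization_le_iff_dvd hne hL0, Finsupp.le_def]
  intro p
  by_cases hp : p.Prime
  · refine (key_fact hp (by omega) hik).trans ?_
    have hmem : p ^ Nat.log p k ∈ Icc 1 k :=
      mem_Icc.2 ⟨Nat.one_le_iff_ne_zero.2 (pow_ne_zero _ hp.pos.ne'),
        Nat.pow_log_le_self p (by omega)⟩
    exact (hp.pow_dvd_iff_le_factorization hL0).1 (Finset.dvd_lcm hmem)
  · simp [Nat.factorization_eq_zero_of_not_prime _ hp]
end
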